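/- The following sets coincide: 𝒢^{(0)×} ∪ 𝒢^{(1)×} = {T ∈ 𝒢^× : (T^{-1})^̂ T ∈ 𝒢^{0×}} = {T ∈ 𝒢^× : (T^{-1})^̂ T ∈ Λ_r^{(0)×}} = {T ∈ 𝒢^× : (T^{-1})^̂ T ∈ (𝒢^0 + rad 𝒢^{(0)})^×}; moreover, if n is even, these sets also equal {T ∈ 𝒢^× : (T^{-1})^̂ T ∈ (𝒢^0 + 𝒢^n + rad 𝒢^{(0)})^×}. (This common set is the group P^±_{p,q,r}.) -/

import Mathlib

open Pointwise

noncomputable section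

namespace ClGA

variable (𝔽 : Type*) [RCLike 𝔽] (p q r : ℕ)

/-- The diagonal weights: `p` ones, `q` minus-ones, `r` zeros. -/
def w : Fin (p + q + r) → 𝔽 := fun i =>
  if (i : ℕ) < p then 1 else if (i : ℕ) < p + q then -1 else 0

/-- The quadratic form on `𝔽^n` whose Gram matrix is `diag(1,…,1,−1,…,−1,0,…,0)`. -/
def Q : QuadraticForm 𝔽 (Fin (p + q + r) → 𝔽) :=
  QuadraticMap.weightedSumSquares 𝔽 (w 𝔽 p q r)

/-- The degenerate Clifford geometric algebra `𝒢 = 𝒢_{p,q,r}`. -/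
abbrev G := CliffordAlgebra (Q 𝔽 p q r)

/-- The generators `e_a`, `a = 1, …, n`. -/
def e (a : Fin (p + q + r)) : G 𝔽 p q r :=
  CliffordAlgebra.ι (Q 𝔽 p q r) (Pi.single a 1)

/-- The even subspace `𝒢^{(0)}`: the `+1`-eigenspace of the grade involution. -/
def Geven : Submodule 𝔽 (G 𝔽 p q r) where
  carrier := {x | CliffordAlgebra.involute x = x}
  add_mem' := by
    intro a b ha hb
    simp only [Set.mem_setOf_eq, map_add] at ha hb ⊢
    rw [ha, hb]
  zero_mem' := by simp
  smul_mem' := by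
    intro c x hx
    simp only [Set.mem_setOf_eq, map_smul] at hx ⊢
    rw [hx]

/-- The odd subspace `𝒢^{(1)}`: the `−1`-eigenspace of the grade involution. -/
def Godd : Submodule 𝔽 (G 𝔽 p q r) where
  carrier := {x | CliffordAlgebra.involute x = -x}
  add_mem' := by
    intro a b ha hb
    simp only [Set.mem_setOf_eq, map_add] at ha hb ⊢
    rw [ha, hb, neg_add]
  zero_mem' := by simp
  smul_mem' := by
    intro c x hx
    simp only [Set.mem_setOf_eq, map_smul] at hx ⊢
    rw [hx, smul_neg]

/-- The grade-1 subspace `𝒢^1`, the span of the generators. -/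
def G1 : Submodule 𝔽 (G 𝔽 p q r) := Submodule.span 𝔽 (Set.range (e 𝔽 p q r))

/-- The scalar (grade-0) subspace `𝒢^0 = 𝔽·1`. -/
def G0 : Submodule 𝔽 (G 𝔽 p q r) := Submodule.span 𝔽 {(1 : G 𝔽 p q r)}

/-- The element `e_{1…n} = e_1 e_2 ⋯ e_n`. -/
def eTop : G 𝔽 p q r := (List.ofFn (e 𝔽 p q r)).prod

/-- The grade-`n` subspace `𝒢^n = 𝔽·e_{1…n}`. -/
def Gn : Submodule 𝔽 (G 𝔽 p q r) := Submodule.span 𝔽 {eTop 𝔽 p q r}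

/-- The Grassmann subalgebra `Λ_r` generated by the null generators. -/
def Λr : Subalgebra 𝔽 (G 𝔽 p q r) :=
  Algebra.adjoin 𝔽 {x | ∃ a : Fin (p + q + r), p + q ≤ (a : ℕ) ∧ x = e 𝔽 p q r a}

/-- `Λ_r` viewed as a subspace of `𝒢`. -/
def Λrs : Submodule 𝔽 (G 𝔽 p q r) := Subalgebra.toSubmodule (Λr 𝔽 p q r)

/-- The even part `Λ_r^{(0)} = Λ_r ∩ 𝒢^{(0)}`. -/
def Λr0 : Submodule 𝔽 (G 𝔽 p q r) := Λrs 𝔽 p q r ⊓ Geven 𝔽 p q r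

/-- The Jacobson radical `rad 𝒢` of `𝒢`: the two-sided ideal generated by the
null generators. -/
def radG : Submodule 𝔽 (G 𝔽 p q r) :=
  Submodule.span 𝔽 {x | ∃ (u v : G 𝔽 p q r) (a : Fin (p + q + r)),
    p + q ≤ (a : ℕ) ∧ x = u * e 𝔽 p q r a * v}

/-- `rad 𝒢^{(0)} = rad 𝒢 ∩ 𝒢^{(0)}`. -/
def radG0 : Submodule 𝔽 (G 𝔽 p q r) := radG 𝔽 p q r ⊓ Geven 𝔽 p q r

/-- For a subset `S ⊆ 𝒢`, `S^×` denotes those elements of `S` invertible in `𝒢`. -/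
def ux (S : Set (G 𝔽 p q r)) : Set (G 𝔽 p q r) := {x ∈ S | IsUnit x}

/-- `𝒢^{(0)×} ∪ 𝒢^{(1)×}` (the group `P^±_{p,q,r}`). -/
def Epm : Set (G 𝔽 p q r) :=
  ux 𝔽 p q r ↑(Geven 𝔽 p q r) ∪ ux 𝔽 p q r ↑(Godd 𝔽 p q r)

/-- `(T⁻¹)^̂ · T`, the grade involution of the inverse times `T`. -/
def tw (T : G 𝔽 p q r) : G 𝔽 p q r :=
  CliffordAlgebra.involute (Ring.inverse T) * T

/-- The invertible elements `T` with `T W T⁻¹ ⊆ W` (adjoint representation). -/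
def gammaAd (W : Submodule 𝔽 (G 𝔽 p q r)) : Set (G 𝔽 p q r) :=
  {T | IsUnit T ∧ ∀ U ∈ W, T * U * Ring.inverse T ∈ W}

/-- The invertible elements `T` with `T̂ W T⁻¹ ⊆ W` (twisted adjoint representation). -/
def gammaTw (W : Submodule 𝔽 (G 𝔽 p q r)) : Set (G 𝔽 p q r) :=
  {T | IsUnit T ∧ ∀ U ∈ W, CliffordAlgebra.involute T * U * Ring.inverse T ∈ W}

/-!
Put `s = (T⁻¹)^ T` for a unit `T`. Then `T̂ s = T`, so `s = ±1` exactly when `T` is even or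
odd, and `ŝ s = 1`, so `s² = 1` as soon as `s` is even.

Null generators anticommute with every vector and square to zero, so `e_a x e_a = 0`; hence a
product of more than `r` of them vanishes and `rad 𝒢` is nil. An even `s = c + m` with `m`
nilpotent and `s² = 1` is `±1`: `m (2c + m) = 1 - c²` forces `c² = 1`, and then `2c + m` is a
unit. This covers `𝒢^0`, `Λ_r^{(0)}`, `𝒢^0 + rad 𝒢^{(0)}`, and `𝒢^n` when `r > 0`.

For `r = 0` and `n` even, `e_{1…n}` anticommutes with every vector. If `s = c + d e_{1…n}`,
conjugating `s² = 1` by an invertible generator shows `c d e_{1…n} = 0`; and `s = d e_{1…n}`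
gives `s T = T̂ s = T`, so `s = 1`.
-/

open CliffordAlgebra

theorem mul_eq_involute_mul_of_anticommute {R M : Type*} [CommRing R]
    [AddCommGroup M] [Module R M] {Q : QuadraticForm R M} {z : CliffordAlgebra Q}
    (hz : ∀ v, z * ι Q v = -(ι Q v * z)) (x : CliffordAlgebra Q) :
    z * x = involute x * z := by
  induction x using CliffordAlgebra.induction with
  | algebraMap c => rw [involute.commutes]; exact (Algebra.commutes c z).symm
  | ι v => rw [involute_ι, hz v, neg_mul]
  | mul x y hx hy => rw [map_mul, ← mul_assoc, hx, mul_assoc, hy, ← mul_assoc]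
  | add x y hx hy => rw [map_add, mul_add, add_mul, hx, hy]

theorem algebraMap_add_eq_one_or_neg_one_of_sq_eq_one {K A : Type*} [Field K] [CharZero K]
    [Ring A] [Algebra K A] [Nontrivial A] {c : K} {m : A} (hm : IsNilpotent m)
    (hsq : (algebraMap K A c + m) ^ 2 = 1) :
    algebraMap K A c + m = 1 ∨ algebraMap K A c + m = -1 := by
  have hcomm : Commute m (algebraMap K A (2 * c)) := Algebra.commute_algebraMap_right _ m
  have hfactor : m * (algebraMap K A (2 * c) + m) = algebraMap K A (1 - c ^ 2) := by
    rw [map_sub, map_one, ← hsq, map_pow, map_mul, map_ofNat]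
    linear_combination (norm := noncomm_ring) (Algebra.commute_algebraMap_right c m).eq
  have hc : c ^ 2 = 1 := by
    have : IsNilpotent (algebraMap K A (1 - c ^ 2)) :=
      hfactor ▸ (hcomm.add_right (Commute.refl m)).isNilpotent_mul_right hm
    rw [IsNilpotent.map_iff (algebraMap K A).injective] at this
    exact (sub_eq_zero.mp this.eq_zero).symm
  have hunit : IsUnit (algebraMap K A (2 * c) + m) :=
    hm.isUnit_add_left_of_commute
      ((isUnit_iff_ne_zero.mpr (mul_ne_zero two_ne_zero (by rintro rfl; simp at hc))).map _)
      hcomm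
  have hm0 : m = 0 := by
    rw [hc, sub_self, map_zero] at hfactor
    exact hunit.mul_left_eq_zero.mp hfactor
  rw [hm0, add_zero]
  rcases mul_self_eq_one_iff.mp (sq c ▸ hc) with rfl | rfl
  · exact Or.inl (map_one _)
  · exact Or.inr (by rw [map_neg, map_one])

section

variable {𝔽 : Type*} [RCLike 𝔽] {p q r : ℕ} {T : G 𝔽 p q r}

local notation "n" => p + q + r

instance : Nontrivial (G 𝔽 p q r) :=
  letI : Invertible (2 : 𝔽) := invertibleOfNonzero two_ne_zero
  inferInstance

theorem w_eq_zero {a : Fin n} (ha : p + q ≤ (a : ℕ)) : w 𝔽 p q r a = 0 := by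
  simp only [w, if_neg (by omega : ¬ (a : ℕ) < p), if_neg (by omega : ¬ (a : ℕ) < p + q)]

theorem w_ne_zero {a : Fin n} (ha : (a : ℕ) < p + q) : w 𝔽 p q r a ≠ 0 := by
  unfold w; split_ifs <;> simp

theorem Q_single (a : Fin n) : Q 𝔽 p q r (Pi.single a 1) = w 𝔽 p q r a := by
  simp [Q, QuadraticMap.weightedSumSquares_apply, Pi.single_apply]

theorem polar_Q_single (a : Fin n) (v : Fin n → 𝔽) :
    QuadraticMap.polar (Q 𝔽 p q r) (Pi.single a 1) v = 2 * w 𝔽 p q r a * v a := by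
  classical
  simp only [QuadraticMap.polar, Q, QuadraticMap.weightedSumSquares_apply,
    ← Finset.sum_sub_distrib]
  rw [Finset.sum_eq_single a (fun b _ hb => by simp [hb]) (by simp)]
  simp only [Pi.add_apply, Pi.single_eq_same, smul_eq_mul]
  ring

theorem e_mul_e_self (a : Fin n) : e 𝔽 p q r a * e 𝔽 p q r a = algebraMap 𝔽 _ (w 𝔽 p q r a) := by
  rw [e, ι_sq_scalar, Q_single]

theorem e_mul_ι_add_ι_mul_e (a : Fin n) (v : Fin n → 𝔽) :
    e 𝔽 p q r a * ι (Q 𝔽 p q r) v + ι (Q 𝔽 p q r) v * e 𝔽 p q r a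
      = algebraMap 𝔽 _ (2 * w 𝔽 p q r a * v a) := by
  rw [e, ι_mul_ι_add_swap, polar_Q_single]

theorem e_mul_e_of_ne {a b : Fin n} (hab : a ≠ b) :
    e 𝔽 p q r a * e 𝔽 p q r b = -(e 𝔽 p q r b * e 𝔽 p q r a) := by
  refine eq_neg_of_add_eq_zero_left ?_
  have h := e_mul_ι_add_ι_mul_e (𝔽 := 𝔽) (p := p) (q := q) (r := r) a (Pi.single b 1)
  rwa [Pi.single_eq_of_ne hab, mul_zero, map_zero] at h

theorem isUnit_e {a : Fin n} (ha : (a : ℕ) < p + q) : IsUnit (e 𝔽 p q r a) := by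
  have hinv : e 𝔽 p q r a * ((w 𝔽 p q r a)⁻¹ • e 𝔽 p q r a) = 1 := by
    rw [mul_smul_comm, e_mul_e_self, Algebra.smul_def, ← map_mul, inv_mul_cancel₀ (w_ne_zero ha),
      map_one]
  exact ⟨⟨_, _, hinv, by rwa [smul_mul_assoc, ← mul_smul_comm]⟩, rfl⟩

theorem ι_eq_sum_smul_e (v : Fin n → 𝔽) : ι (Q 𝔽 p q r) v = ∑ b, v b • e 𝔽 p q r b := by
  conv_lhs => rw [pi_eq_sum_univ v]
  simp only [map_sum, map_smul, e]
  congr! 3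
  ext
  simp [Pi.single_apply, eq_comm]

theorem e_mul_eq_involute_mul {a : Fin n} (ha : p + q ≤ (a : ℕ)) (x : G 𝔽 p q r) :
    e 𝔽 p q r a * x = involute x * e 𝔽 p q r a :=
  mul_eq_involute_mul_of_anticommute (fun v => eq_neg_of_add_eq_zero_left <| by
    rw [e_mul_ι_add_ι_mul_e, w_eq_zero ha, mul_zero, zero_mul, map_zero]) x

theorem e_mul_mul_e_eq_zero {a : Fin n} (ha : p + q ≤ (a : ℕ)) (x : G 𝔽 p q r) :
    e 𝔽 p q r a * x * e 𝔽 p q r a = 0 := by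
  rw [e_mul_eq_involute_mul ha, mul_assoc, e_mul_e_self, w_eq_zero ha, map_zero, mul_zero]

theorem eTop_eq_prod_finRange : eTop 𝔽 p q r = ((List.finRange n).map (e 𝔽 p q r)).prod := by
  rw [eTop, List.ofFn_eq_map]

theorem e_mul_prod_map_e (b : Fin n) (l : List (Fin n)) :
    e 𝔽 p q r b * (l.map (e 𝔽 p q r)).prod
      = (-1 : 𝔽) ^ (l.length + l.count b) • ((l.map (e 𝔽 p q r)).prod * e 𝔽 p q r b) := by
  induction l with
  | nil => simp
  | cons c t ih =>
    have hswap : e 𝔽 p q r b * e 𝔽 p q r c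
        = (-1 : 𝔽) ^ (1 + [c].count b) • (e 𝔽 p q r c * e 𝔽 p q r b) := by
      by_cases hbc : b = c
      · simp [hbc]
      · simp [Ne.symm hbc, e_mul_e_of_ne hbc]
    simp only [List.map_cons, List.prod_cons]
    rw [← mul_assoc, hswap, smul_mul_assoc, mul_assoc, ih, mul_smul_comm, smul_smul, ← pow_add,
      ← mul_assoc, List.length_cons, List.count_cons]
    congr 2
    split_ifs <;> simp_all [beq_iff_eq] <;> omega

theorem e_mul_eTop (hn : Even n) (b : Fin n) :
    e 𝔽 p q r b * eTop 𝔽 p q r = -(eTop 𝔽 p q r * e 𝔽 p q r b) := by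
  rw [eTop_eq_prod_finRange, e_mul_prod_map_e, List.length_finRange,
    List.count_eq_one_of_mem (List.nodup_finRange n) (List.mem_finRange b), pow_succ,
    hn.neg_one_pow, one_mul, neg_one_smul]

theorem eTop_mul_eq_involute_mul (hn : Even n) (x : G 𝔽 p q r) :
    eTop 𝔽 p q r * x = involute x * eTop 𝔽 p q r := by
  refine mul_eq_involute_mul_of_anticommute (fun v => ?_) x
  simp only [ι_eq_sum_smul_e, Finset.mul_sum, Finset.sum_mul, ← Finset.sum_neg_distrib,
    mul_smul_comm, smul_mul_assoc, ← smul_neg, e_mul_eTop hn, neg_neg]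

theorem involute_eTop (hn : Even n) : involute (eTop 𝔽 p q r) = eTop 𝔽 p q r := by
  have h := involute_prod_map_ι (Q := Q 𝔽 p q r) (List.ofFn fun a => Pi.single a (1 : 𝔽))
  rwa [List.map_ofFn, List.length_ofFn, hn.neg_one_pow, one_smul] at h

theorem mul_mem_radG_right {m : G 𝔽 p q r} (hm : m ∈ radG 𝔽 p q r) (y : G 𝔽 p q r) :
    m * y ∈ radG 𝔽 p q r := by
  refine (Submodule.span_le.mpr ?_ :
    radG 𝔽 p q r ≤ (radG 𝔽 p q r).comap (LinearMap.mulRight 𝔽 y)) hm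
  rintro _ ⟨u, v, a, ha, rfl⟩
  exact Submodule.subset_span ⟨u, v * y, a, ha, by simp only [LinearMap.mulRight_apply, mul_assoc]⟩

theorem prod_mem_radG {l : List (Fin n)} {a : Fin n} (ha : p + q ≤ (a : ℕ)) (hal : a ∈ l) :
    (l.map (e 𝔽 p q r)).prod ∈ radG 𝔽 p q r := by
  obtain ⟨l₁, l₂, rfl⟩ := List.append_of_mem hal
  rw [List.map_append, List.prod_append, List.map_cons, List.prod_cons, ← mul_assoc]
  exact Submodule.subset_span ⟨_, _, a, ha, rfl⟩

theorem eTop_mem_radG (hr : 0 < r) : eTop 𝔽 p q r ∈ radG 𝔽 p q r := by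
  rw [eTop_eq_prod_finRange]
  exact prod_mem_radG (a := ⟨p + q, by omega⟩) le_rfl (List.mem_finRange _)

theorem radG_eq_bot (hr : r = 0) : radG 𝔽 p q r = ⊥ := by
  refine eq_bot_iff.mpr (Submodule.span_le.mpr ?_)
  rintro _ ⟨u, v, a, ha, rfl⟩
  exact absurd a.isLt (by omega)

theorem Λrs_le_G0_sup_radG : Λrs 𝔽 p q r ≤ G0 𝔽 p q r ⊔ radG 𝔽 p q r := by
  intro x (hx : x ∈ Λr 𝔽 p q r)
  induction hx using Algebra.adjoin_induction with
  | mem z hz =>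
    obtain ⟨a, ha, rfl⟩ := hz
    exact Submodule.mem_sup_right (Submodule.subset_span ⟨1, 1, a, ha, by rw [one_mul, mul_one]⟩)
  | algebraMap c =>
    exact Submodule.mem_sup_left
      (Submodule.mem_span_singleton.mpr ⟨c, (Algebra.algebraMap_eq_smul_one c).symm⟩)
  | add x y _ _ hx hy => exact add_mem hx hy
  | mul x y _ _ hx hy =>
    obtain ⟨_, hc, m, hm, rfl⟩ := Submodule.mem_sup.mp hx
    obtain ⟨c, rfl⟩ := Submodule.mem_span_singleton.mp hc
    rw [add_mul, smul_mul_assoc, one_mul]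
    exact add_mem (Submodule.smul_mem _ c hy) (Submodule.mem_sup_right (mul_mem_radG_right hm y))

def nullProd (l : List (Fin r)) : G 𝔽 p q r :=
  (l.map fun i => e 𝔽 p q r (Fin.natAdd (p + q) i)).prod

theorem nullProd_eq_zero_of_not_nodup {l : List (Fin r)} (hl : ¬ l.Nodup) :
    nullProd (𝔽 := 𝔽) (p := p) (q := q) l = 0 := by
  induction l with
  | nil => exact absurd List.nodup_nil hl
  | cons c t ih =>
    have hc : p + q ≤ (Fin.natAdd (p + q) c : ℕ) := by simp
    simp only [nullProd, List.map_cons, List.prod_cons] at ih ⊢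
    by_cases hct : c ∈ t
    · obtain ⟨t₁, t₂, rfl⟩ := List.append_of_mem hct
      rw [List.map_append, List.prod_append, List.map_cons, List.prod_cons, ← mul_assoc,
        ← mul_assoc, e_mul_mul_e_eq_zero hc, zero_mul]
    · rw [ih fun ht => hl (List.nodup_cons.mpr ⟨hct, ht⟩), mul_zero]

def nullWords (k : ℕ) : Submodule 𝔽 (G 𝔽 p q r) :=
  Submodule.span 𝔽 {x | ∃ (l : List (Fin r)) (y : G 𝔽 p q r), l.length = k ∧ x = nullProd l * y}

theorem nullWords_mul_radG_le (k : ℕ) :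
    nullWords (𝔽 := 𝔽) (p := p) (q := q) (r := r) k * radG 𝔽 p q r ≤ nullWords (k + 1) := by
  rw [nullWords, radG, Submodule.span_mul_span]
  refine Submodule.span_le.mpr ?_
  rintro _ ⟨_, ⟨l, y, hl, rfl⟩, _, ⟨u, v, a, ha, rfl⟩, rfl⟩
  obtain ⟨i, rfl⟩ : ∃ i : Fin r, Fin.natAdd (p + q) i = a :=
    ⟨⟨a - (p + q), by omega⟩, Fin.ext (by simp; omega)⟩
  refine Submodule.subset_span ⟨l ++ [i], involute (y * u) * v, by simp [hl], ?_⟩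
  have hswap : e 𝔽 p q r (Fin.natAdd (p + q) i) * involute (y * u)
      = y * u * e 𝔽 p q r (Fin.natAdd (p + q) i) := by
    rw [e_mul_eq_involute_mul ha, involute_involute]
  simp only [nullProd, List.map_append, List.map_cons, List.map_nil, List.prod_append,
    List.prod_cons, List.prod_nil, mul_one, mul_assoc]
  rw [← mul_assoc _ (involute _) v, hswap]
  simp only [mul_assoc]

theorem radG_pow_le_nullWords (k : ℕ) : radG 𝔽 p q r ^ k ≤ nullWords k := by
  induction k with
  | zero =>
    rw [pow_zero, Submodule.one_eq_span, Submodule.span_le, Set.singleton_subset_iff]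
    exact Submodule.subset_span ⟨[], 1, rfl, by simp [nullProd]⟩
  | succ k ih =>
    rw [pow_succ]
    exact (mul_le_mul_left ih _).trans (nullWords_mul_radG_le k)

theorem nullWords_eq_bot {k : ℕ} (hk : r < k) :
    nullWords (𝔽 := 𝔽) (p := p) (q := q) (r := r) k = ⊥ := by
  refine eq_bot_iff.mpr (Submodule.span_le.mpr ?_)
  rintro _ ⟨l, y, rfl, rfl⟩
  have hl : ¬ l.Nodup := fun hl => by simpa using hk.trans_le hl.length_le_card
  simp [nullProd_eq_zero_of_not_nodup hl]

theorem isNilpotent_of_mem_radG {m : G 𝔽 p q r} (hm : m ∈ radG 𝔽 p q r) : IsNilpotent m :=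
  ⟨r + 1, by simpa [nullWords_eq_bot (Nat.lt_succ_self r)] using
    radG_pow_le_nullWords (r + 1) (Submodule.pow_mem_pow _ hm (r + 1))⟩

theorem involute_mul_tw (hT : IsUnit T) : involute T * tw 𝔽 p q r T = T := by
  rw [tw, ← mul_assoc, ← map_mul, Ring.mul_inverse_cancel T hT, map_one, one_mul]

theorem involute_tw_mul_tw (hT : IsUnit T) : involute (tw 𝔽 p q r T) * tw 𝔽 p q r T = 1 := by
  rw [tw, map_mul, involute_involute, mul_assoc, ← mul_assoc (involute T), ← map_mul,
    Ring.mul_inverse_cancel T hT, map_one, one_mul, Ring.inverse_mul_cancel T hT]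

theorem tw_sq_eq_one (hT : IsUnit T) (he : tw 𝔽 p q r T ∈ Geven 𝔽 p q r) :
    tw 𝔽 p q r T ^ 2 = 1 := by
  rw [sq]
  nth_rewrite 1 [← show involute (tw 𝔽 p q r T) = tw 𝔽 p q r T from he]
  exact involute_tw_mul_tw hT

theorem tw_eq_one_iff (hT : IsUnit T) : tw 𝔽 p q r T = 1 ↔ T ∈ Geven 𝔽 p q r := by
  rw [← (hT.map involute).mul_right_inj, involute_mul_tw hT, mul_one]
  exact eq_comm

theorem tw_eq_neg_one_iff (hT : IsUnit T) : tw 𝔽 p q r T = -1 ↔ T ∈ Godd 𝔽 p q r := by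
  rw [← (hT.map involute).mul_right_inj, involute_mul_tw hT, mul_neg_one]
  exact eq_comm.trans neg_eq_iff_eq_neg

theorem mem_Epm_iff : T ∈ Epm 𝔽 p q r ↔ IsUnit T ∧ (tw 𝔽 p q r T = 1 ∨ tw 𝔽 p q r T = -1) := by
  refine ⟨?_, fun ⟨hT, h⟩ => ?_⟩
  · rintro (⟨he, hT⟩ | ⟨ho, hT⟩)
    · exact ⟨hT, Or.inl ((tw_eq_one_iff hT).mpr he)⟩
    · exact ⟨hT, Or.inr ((tw_eq_neg_one_iff hT).mpr ho)⟩
  · rw [tw_eq_one_iff hT, tw_eq_neg_one_iff hT] at h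
    exact h.imp (⟨·, hT⟩) (⟨·, hT⟩)

theorem Epm_eq_of_forall_tw_mem {W : Submodule 𝔽 (G 𝔽 p q r)} (h1 : 1 ∈ W)
    (hW : ∀ T, IsUnit T → tw 𝔽 p q r T ∈ W → tw 𝔽 p q r T = 1 ∨ tw 𝔽 p q r T = -1) :
    Epm 𝔽 p q r = {T | IsUnit T ∧ tw 𝔽 p q r T ∈ ux 𝔽 p q r W} := by
  ext T
  refine mem_Epm_iff.trans ⟨?_, fun ⟨hT, hs, _⟩ => ⟨hT, hW T hT hs⟩⟩
  rintro ⟨hT, h | h⟩ <;> rw [Set.mem_ofPred_eq, h]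
  · exact ⟨hT, h1, isUnit_one⟩
  · exact ⟨hT, neg_mem h1, isUnit_one.neg⟩

theorem G0_le_Geven : G0 𝔽 p q r ≤ Geven 𝔽 p q r :=
  Submodule.span_le.mpr (Set.singleton_subset_iff.mpr (map_one involute))

theorem Gn_le_Geven (hn : Even n) : Gn 𝔽 p q r ≤ Geven 𝔽 p q r :=
  Submodule.span_le.mpr (Set.singleton_subset_iff.mpr (involute_eTop hn))

theorem Gn_le_radG (hr : 0 < r) : Gn 𝔽 p q r ≤ radG 𝔽 p q r :=
  Submodule.span_le.mpr (Set.singleton_subset_iff.mpr (eTop_mem_radG hr))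

theorem tw_eq_one_or_neg_one_of_mem_G0_sup_radG (hT : IsUnit T)
    (hs : tw 𝔽 p q r T ∈ G0 𝔽 p q r ⊔ radG 𝔽 p q r) (he : tw 𝔽 p q r T ∈ Geven 𝔽 p q r) :
    tw 𝔽 p q r T = 1 ∨ tw 𝔽 p q r T = -1 := by
  have hsq := tw_sq_eq_one hT he
  obtain ⟨_, hc, m, hm, hsum⟩ := Submodule.mem_sup.mp hs
  obtain ⟨c, rfl⟩ := Submodule.mem_span_singleton.mp hc
  rw [← Algebra.algebraMap_eq_smul_one] at hsum
  rw [← hsum] at hsq ⊢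
  exact algebraMap_add_eq_one_or_neg_one_of_sq_eq_one (isNilpotent_of_mem_radG hm) hsq

theorem Epm_eq_of_le_G0_sup_radG {W : Submodule 𝔽 (G 𝔽 p q r)} (h1 : 1 ∈ W)
    (hW : W ≤ G0 𝔽 p q r ⊔ radG 𝔽 p q r) (he : W ≤ Geven 𝔽 p q r) :
    Epm 𝔽 p q r = {T | IsUnit T ∧ tw 𝔽 p q r T ∈ ux 𝔽 p q r W} :=
  Epm_eq_of_forall_tw_mem h1 fun _ hT hs =>
    tw_eq_one_or_neg_one_of_mem_G0_sup_radG hT (hW hs) (he hs)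

theorem tw_eq_one_of_eq_smul_eTop (hn : Even n) (hT : IsUnit T) {d : 𝔽}
    (h : tw 𝔽 p q r T = d • eTop 𝔽 p q r) : tw 𝔽 p q r T = 1 := by
  have hsT : tw 𝔽 p q r T * T = 1 * T :=
    calc tw 𝔽 p q r T * T = involute T * (d • eTop 𝔽 p q r) := by
          rw [h, smul_mul_assoc, eTop_mul_eq_involute_mul hn, mul_smul_comm]
      _ = 1 * T := by rw [← h, involute_mul_tw hT, one_mul]
  exact hT.mul_left_inj.mp hsT

theorem eq_zero_or_smul_eTop_eq_zero (hr : r = 0) (hn : Even n) (hn1 : 1 ≤ n) {c d : 𝔽}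
    (h : (algebraMap 𝔽 (G 𝔽 p q r) c + d • eTop 𝔽 p q r) ^ 2 = 1) :
    c = 0 ∨ d • eTop 𝔽 p q r = 0 := by
  set a := algebraMap 𝔽 (G 𝔽 p q r) c
  set E := d • eTop 𝔽 p q r
  set b : Fin n := ⟨0, hn1⟩
  have hb : IsUnit (e 𝔽 p q r b) := isUnit_e (by simp [b]; omega)
  have hconj : e 𝔽 p q r b * (a + E) = (a - E) * e 𝔽 p q r b := by
    rw [mul_add, mul_smul_comm, e_mul_eTop hn, smul_neg, ← smul_mul_assoc,
      ← Algebra.commutes c, sub_mul, sub_eq_add_neg]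
  have h' : (a - E) ^ 2 = 1 := by
    refine hb.mul_left_inj.mp ?_
    rw [sq, mul_assoc, ← hconj, ← mul_assoc, ← hconj, mul_assoc, ← sq, h, mul_one, one_mul]
  have hcomm : a * E = E * a := Algebra.commutes c E
  have h4 : (4 * c) • E = 0 := by
    rw [Algebra.smul_def, map_mul, map_ofNat]
    linear_combination (norm := noncomm_ring) h - h' + 2 * hcomm
  rcases smul_eq_zero.mp h4 with h4 | h4
  · exact Or.inl (by simpa using h4)
  · exact Or.inr h4

theorem tw_eq_one_or_neg_one_of_mem_G0_sup_Gn (hr : r = 0) (hn : Even n) (hn1 : 1 ≤ n)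
    (hT : IsUnit T) (hs : tw 𝔽 p q r T ∈ G0 𝔽 p q r ⊔ Gn 𝔽 p q r) :
    tw 𝔽 p q r T = 1 ∨ tw 𝔽 p q r T = -1 := by
  have hsq := tw_sq_eq_one hT (sup_le G0_le_Geven (Gn_le_Geven hn) hs)
  obtain ⟨_, hc, _, hd, hsum⟩ := Submodule.mem_sup.mp hs
  obtain ⟨c, rfl⟩ := Submodule.mem_span_singleton.mp hc
  obtain ⟨d, rfl⟩ := Submodule.mem_span_singleton.mp hd
  rw [← Algebra.algebraMap_eq_smul_one] at hsum
  rw [← hsum] at hsq ⊢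
  rcases eq_zero_or_smul_eTop_eq_zero hr hn hn1 hsq with rfl | hdE
  · rw [hsum]
    exact Or.inl (tw_eq_one_of_eq_smul_eTop hn hT (by rw [← hsum, map_zero, zero_add]))
  · rw [hdE] at hsq ⊢
    exact algebraMap_add_eq_one_or_neg_one_of_sq_eq_one IsNilpotent.zero hsq

end

/-- Equivalent definitions of the group `P^±_{p,q,r} = 𝒢^{(0)×} ∪ 𝒢^{(1)×}`. -/
theorem stmt13 (hn : 1 ≤ p + q + r) :
    Epm 𝔽 p q r = {T : G 𝔽 p q r | IsUnit T ∧ tw 𝔽 p q r T ∈ ux 𝔽 p q r ↑(G0 𝔽 p q r)} ∧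
    Epm 𝔽 p q r = {T : G 𝔽 p q r | IsUnit T ∧ tw 𝔽 p q r T ∈ ux 𝔽 p q r ↑(Λr0 𝔽 p q r)} ∧
    Epm 𝔽 p q r = {T : G 𝔽 p q r | IsUnit T ∧ tw 𝔽 p q r T ∈ ux 𝔽 p q r ↑(G0 𝔽 p q r ⊔ radG0 𝔽 p q r)} ∧
    (Even (p + q + r) →
      Epm 𝔽 p q r = {T : G 𝔽 p q r | IsUnit T ∧ tw 𝔽 p q r T ∈ ux 𝔽 p q r ↑(G0 𝔽 p q r ⊔ Gn 𝔽 p q r ⊔ radG0 𝔽 p q r)}) := by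
  have one_mem_G0 : (1 : G 𝔽 p q r) ∈ G0 𝔽 p q r := Submodule.mem_span_singleton_self 1
  refine ⟨Epm_eq_of_le_G0_sup_radG one_mem_G0 le_sup_left G0_le_Geven,
    Epm_eq_of_le_G0_sup_radG ⟨one_mem (Λr 𝔽 p q r), map_one involute⟩
      (inf_le_left.trans Λrs_le_G0_sup_radG) inf_le_right,
    Epm_eq_of_le_G0_sup_radG (Submodule.mem_sup_left one_mem_G0)
      (sup_le_sup_left inf_le_left _) (sup_le G0_le_Geven inf_le_right),
    fun heven => ?_⟩
  have one_mem : (1 : G 𝔽 p q r) ∈ G0 𝔽 p q r ⊔ Gn 𝔽 p q r ⊔ radG0 𝔽 p q r :=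
    Submodule.mem_sup_left (Submodule.mem_sup_left one_mem_G0)
  rcases Nat.eq_zero_or_pos r with hr | hr
  · refine Epm_eq_of_forall_tw_mem one_mem fun T hT hs =>
      tw_eq_one_or_neg_one_of_mem_G0_sup_Gn hr heven hn hT ?_
    rwa [radG0, radG_eq_bot hr, bot_inf_eq, sup_bot_eq] at hs
  · exact Epm_eq_of_le_G0_sup_radG one_mem
      (sup_le (sup_le le_sup_left ((Gn_le_radG hr).trans le_sup_right))
        (inf_le_left.trans le_sup_right))
      (sup_le (sup_le G0_le_Geven (Gn_le_Geven heven)) inf_le_right)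

end ClGA
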